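/- arXiv:2602.03440 — 2 statements merged into one kernel-verified Lean document; each statement's English description precedes it below -/
import Mathlib

section
/- For every odd prime p, the rational number (∑_{j=0}^{p} E_j) − 3/2 is p times a rational number whose denominator is not divisible by p, where for m ≥ 0, E_m = 2 · (1 − 2^{m+1}) · B_{m+1}/(m+1); that is, ∑_{j=0}^{p} E_j ≡ 3/2 (mod p) in the ring of p-integral rationals. -/
open Finset PowerSeries

lemma key_ps : (exp ℚ + 1) * rescale (2:ℚ) (bernoulliPowerSeries ℚ)
    = (PowerSeries.C (2:ℚ)) * bernoulliPowerSeries ℚ := by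
  have hne : (exp ℚ - 1 : ℚ⟦X⟧) ≠ 0 := by
    intro h
    have := congrArg (coeff 1) h
    simp [coeff_exp] at this
  apply mul_right_cancel₀ hne
  have hB := bernoulliPowerSeries_mul_exp_sub_one ℚ
  have hexp : rescale (2:ℚ) (exp ℚ) = exp ℚ * exp ℚ := by
    have h := exp_pow_eq_rescale_exp (A := ℚ) 2
    rw [pow_two] at h
    rw [show ((2:ℕ):ℚ) = (2:ℚ) by norm_num] at h
    exact h.symm
  have hX : rescale (2:ℚ) (X : ℚ⟦X⟧) = PowerSeries.C (2:ℚ) * X := by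
    ext n
    rw [coeff_rescale, coeff_C_mul, coeff_X]
    by_cases h : n = 1 <;> simp [h, coeff_X]
  calc (exp ℚ + 1) * rescale (2:ℚ) (bernoulliPowerSeries ℚ) * (exp ℚ - 1)
      = rescale (2:ℚ) (bernoulliPowerSeries ℚ) * (exp ℚ * exp ℚ - 1) := by ring
    _ = rescale (2:ℚ) (bernoulliPowerSeries ℚ) * (rescale 2 (exp ℚ) - 1) := by rw [hexp]
    _ = rescale (2:ℚ) (bernoulliPowerSeries ℚ * (exp ℚ - 1)) := by
        rw [map_mul, map_sub, map_one]
    _ = PowerSeries.C (2:ℚ) * X := by rw [hB, hX]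
    _ = PowerSeries.C (2:ℚ) * (bernoulliPowerSeries ℚ * (exp ℚ - 1)) := by rw [hB]
    _ = PowerSeries.C (2:ℚ) * bernoulliPowerSeries ℚ * (exp ℚ - 1) := by ring

lemma factD (n : ℕ) :
    ∑ j ∈ range (n+1), (n.choose j : ℚ) * 2^j * bernoulli j = (2 - 2^n) * bernoulli n := by
  have h := congrArg (coeff n) key_ps
  rw [add_mul, one_mul, map_add, coeff_C_mul, coeff_mul,
    Finset.Nat.sum_antidiagonal_eq_sum_range_succ_mk] at h
  simp only [coeff_rescale, bernoulliPowerSeries, coeff_mk, coeff_exp, Algebra.algebraMap_self,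
    map_div₀, map_one, RingHom.id_apply] at h
  have hr : ∑ x ∈ range (n+1), (1:ℚ)/x.factorial * (2^(n-x) * (bernoulli (n-x)/(n-x).factorial))
      = ∑ j ∈ range (n+1), 1/(((n-j).factorial:ℚ)) * (2^j * (bernoulli j / j.factorial)) := by
    rw [← Finset.sum_range_reflect]
    apply Finset.sum_congr rfl
    intro j hj
    rw [mem_range] at hj
    have h1 : n + 1 - 1 - j = n - j := by omega
    have h2 : n - (n - j) = j := by omega
    rw [h1, h2]
  rw [hr] at h
  have hfac : ∀ j ∈ range (n+1), (n.choose j : ℚ) * 2^j * bernoulli j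
      = (n.factorial : ℚ) * (1/(((n-j).factorial:ℚ)) * (2^j * (bernoulli j / j.factorial))) := by
    intro j hj
    rw [mem_range] at hj
    rw [Nat.cast_choose ℚ (by omega : j ≤ n)]
    have c1 : ((j.factorial : ℚ)) ≠ 0 := Nat.cast_ne_zero.mpr j.factorial_ne_zero
    have c2 : (((n-j).factorial : ℚ)) ≠ 0 := Nat.cast_ne_zero.mpr (n-j).factorial_ne_zero
    field_simp
  rw [Finset.sum_congr rfl hfac, ← Finset.mul_sum, eq_sub_iff_add_eq.mpr h]
  have c3 : ((n.factorial : ℚ)) ≠ 0 := Nat.cast_ne_zero.mpr n.factorial_ne_zero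
  field_simp

/-- The Euler numbers `E m = E_m(0)`, via the closed form
`E_m = 2 (1 - 2^(m+1)) B_(m+1) / (m+1)`. -/
def eulerNumber (m : ℕ) : ℚ := 2 * (1 - (2 : ℚ) ^ (m + 1)) * bernoulli (m + 1) / ((m : ℚ) + 1)

lemma euler_rec (m : ℕ) :
    ∑ k ∈ range (m+1), (m.choose k : ℚ) * eulerNumber k
      = (if m = 0 then 2 else 0) - eulerNumber m := by
  have step : ∀ k ∈ range (m+1), (m.choose k : ℚ) * eulerNumber k
      = (2/((m:ℚ)+1)) * (((m+1).choose (k+1) : ℚ) * ((1 - 2^(k+1)) * bernoulli (k+1))) := by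
    intro k _
    unfold eulerNumber
    have hc : ((m:ℚ)+1) * (m.choose k : ℚ) = ((m+1).choose (k+1) : ℚ) * ((k:ℚ)+1) := by
      exact_mod_cast congrArg (Nat.cast (R := ℚ)) (Nat.add_one_mul_choose_eq m k)
    have hk0 : ((k:ℚ)+1) ≠ 0 := by positivity
    have hm0 : ((m:ℚ)+1) ≠ 0 := by positivity
    field_simp
    linear_combination ((1 - (2:ℚ)^(k+1))*bernoulli (k+1)) * hc
  rw [Finset.sum_congr rfl step, ← Finset.mul_sum]
  have shift : ∑ k ∈ range (m+1), ((m+1).choose (k+1) : ℚ) * ((1 - 2^(k+1)) * bernoulli (k+1))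
      = ∑ j ∈ range (m+2), ((m+1).choose j : ℚ) * ((1 - 2^j) * bernoulli j) := by
    rw [Finset.sum_range_succ' _ (m+1)]
    norm_num
  rw [shift]
  have split : ∑ j ∈ range (m+2), ((m+1).choose j : ℚ) * ((1 - 2^j) * bernoulli j)
      = (∑ j ∈ range (m+2), ((m+1).choose j : ℚ) * bernoulli j)
        - ∑ j ∈ range (m+2), ((m+1).choose j : ℚ) * 2^j * bernoulli j := by
    rw [← Finset.sum_sub_distrib]
    apply Finset.sum_congr rfl
    intro j _
    ring
  have s1 : ∑ j ∈ range (m+2), ((m+1).choose j : ℚ) * bernoulli j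
      = (if m = 0 then 1 else 0) + bernoulli (m+1) := by
    rw [Finset.sum_range_succ, sum_bernoulli, Nat.choose_self]
    rcases Nat.eq_zero_or_pos m with hm | hm
    · subst hm; norm_num
    · have h1 : m + 1 ≠ 1 := by omega
      have h2 : m ≠ 0 := by omega
      simp [h1, h2]
  have s2 := factD (m+1)
  rw [split, s1, s2]
  rcases Nat.eq_zero_or_pos m with hm | hm
  · subst hm
    norm_num [eulerNumber, bernoulli_one]
  · have hm' : m ≠ 0 := by omega
    simp only [hm', if_false]
    unfold eulerNumber
    have hm0 : ((m:ℚ)+1) ≠ 0 := by positivity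
    field_simp
    ring

lemma euler_rec' {m : ℕ} (hm : m ≠ 0) :
    ∑ k ∈ range m, (m.choose k : ℚ) * eulerNumber k = -(2 * eulerNumber m) := by
  have h := euler_rec m
  rw [Finset.sum_range_succ, if_neg hm, Nat.choose_self] at h
  push_cast at h
  linarith

lemma euler_dyadic (m : ℕ) : eulerNumber m * 2^m ∈ (Int.castRingHom ℚ).range := by
  induction m using Nat.strong_induction_on with
  | _ m ih =>
    rcases Nat.eq_zero_or_pos m with hm | hm
    · subst hm
      refine ⟨1, ?_⟩
      norm_num [eulerNumber, bernoulli_one]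
    · have hm' : m ≠ 0 := by omega
      have key : eulerNumber m * 2^m
          = ∑ k ∈ range m, -((m.choose k : ℚ) * 2^(m-1-k) * (eulerNumber k * 2^k)) := by
        have hpow : (2:ℚ)^m = 2 * 2^(m-1) := by
          rw [← pow_succ']
          congr 1
          omega
        rw [hpow, show eulerNumber m * (2 * 2^(m-1)) = (2 * eulerNumber m) * 2^(m-1) by ring,
          ← neg_neg (2 * eulerNumber m), ← euler_rec' hm', neg_mul, Finset.sum_mul, ← Finset.sum_neg_distrib]
        apply Finset.sum_congr rfl
        intro k hk
        rw [mem_range] at hk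
        have : (2:ℚ)^(m-1) = 2^(m-1-k) * 2^k := by
          rw [← pow_add]
          congr 1
          omega
        rw [this]
        ring
      rw [key]
      apply Subring.sum_mem
      intro k hk
      apply Subring.neg_mem
      apply Subring.mul_mem
      · apply Subring.mul_mem
        · exact ⟨m.choose k, by push_cast; rfl⟩
        · exact ⟨2^(m-1-k), by push_cast; norm_num⟩
      · exact ih k (mem_range.mp hk)

def eulerPolyNat (m x : ℕ) : ℚ :=
  ∑ k ∈ range (m+1), (m.choose k : ℚ) * eulerNumber k * (x:ℚ)^(m-k)

lemma eulerPolyNat_zero (m : ℕ) : eulerPolyNat m 0 = eulerNumber m := by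
  unfold eulerPolyNat
  rw [Finset.sum_eq_single m]
  · simp
  · intro k hk hne
    rw [mem_range] at hk
    have : m - k ≠ 0 := by omega
    simp [this]
  · intro h
    exact absurd (self_mem_range_succ m) h

lemma eulerPolyNat_step (m x : ℕ) :
    eulerPolyNat m (x+1) + eulerPolyNat m x = 2 * (x:ℚ)^m := by
  have main : eulerPolyNat m (x+1)
      = ∑ j ∈ range (m+1), (m.choose j : ℚ) * ((if j = 0 then 2 else 0) - eulerNumber j)
          * (x:ℚ)^(m-j) := by
    have e1 : eulerPolyNat m (x+1)
        = ∑ k ∈ range (m+1), ∑ i ∈ range (m+1-k),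
            (m.choose k : ℚ) * eulerNumber k * ((m-k).choose i : ℚ) * (x:ℚ)^(m-(k+i)) := by
      unfold eulerPolyNat
      apply Finset.sum_congr rfl
      intro k hk
      rw [mem_range] at hk
      have hb : ((x:ℚ)+1)^(m-k) = ∑ i ∈ range (m-k+1), (x:ℚ)^i * 1^(m-k-i) * ((m-k).choose i : ℚ) :=
        add_pow (x:ℚ) 1 (m-k)
      have hb2 : ((x:ℚ)+1)^(m-k) = ∑ i ∈ range (m+1-k), ((m-k).choose i : ℚ) * (x:ℚ)^(m-(k+i)) := by
        rw [hb, ← Finset.sum_range_reflect]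
        have hr : m - k + 1 = m + 1 - k := by omega
        rw [hr]
        apply Finset.sum_congr rfl
        intro i hi
        rw [mem_range] at hi
        have hik : i ≤ m - k := by omega
        have h1 : m + 1 - k - 1 - i = m - k - i := by omega
        rw [h1, one_pow, Nat.choose_symm hik, show m - k - i = m - (k+i) by omega]
        ring
      push_cast
      rw [hb2, Finset.mul_sum]
      apply Finset.sum_congr rfl
      intro i _
      ring
    rw [e1]
    have e2 : ∀ k ∈ range (m+1),
        (∑ i ∈ range (m+1-k), (m.choose k : ℚ) * eulerNumber k * ((m-k).choose i : ℚ) * (x:ℚ)^(m-(k+i)))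
        = ∑ j ∈ Finset.Ico k (m+1), (m.choose k : ℚ) * eulerNumber k * ((m-k).choose (j-k) : ℚ) * (x:ℚ)^(m-j) := by
      intro k hk
      rw [Finset.sum_Ico_eq_sum_range]
      apply Finset.sum_congr rfl
      intro i _
      have h1 : k + i - k = i := by omega
      rw [h1]
    rw [Finset.sum_congr rfl e2]
    rw [Finset.range_eq_Ico]
    rw [Finset.sum_Ico_Ico_comm]
    apply Finset.sum_congr rfl
    intro j hj
    rw [Finset.mem_Ico] at hj
    have hj' : j ≤ m := by omega
    have e3 : ∀ k ∈ Finset.Ico 0 (j+1),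
        (m.choose k : ℚ) * eulerNumber k * ((m-k).choose (j-k) : ℚ) * (x:ℚ)^(m-j)
        = (m.choose j : ℚ) * ((j.choose k : ℚ) * eulerNumber k) * (x:ℚ)^(m-j) := by
      intro k hk
      rw [Finset.mem_Ico] at hk
      have hkj : k ≤ j := by omega
      have hc : (m.choose j : ℚ) * (j.choose k : ℚ) = (m.choose k : ℚ) * ((m-k).choose (j-k) : ℚ) := by
        exact_mod_cast congrArg (Nat.cast (R := ℚ)) (Nat.choose_mul (n := m) hkj)
      linear_combination (-(eulerNumber k * (x:ℚ)^(m-j))) * hc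
    rw [Finset.sum_congr rfl e3, ← Finset.sum_mul, ← Finset.mul_sum,
      show Finset.Ico 0 (j+1) = range (j+1) from (Finset.range_eq_Ico (j+1)).symm ▸ rfl,
      euler_rec j]
  rw [main]
  unfold eulerPolyNat
  rw [← Finset.sum_add_distrib]
  have : ∀ j ∈ range (m+1),
      ((m.choose j : ℚ) * ((if j = 0 then 2 else 0) - eulerNumber j) * (x:ℚ)^(m-j)
        + (m.choose j : ℚ) * eulerNumber j * (x:ℚ)^(m-j))
      = if j = 0 then 2 * (x:ℚ)^m else 0 := by
    intro j hj
    by_cases h : j = 0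
    · subst h
      simp only [Nat.choose_zero_right, Nat.cast_one, one_mul, Nat.sub_zero, if_true]
      ring
    · simp only [h, if_false]
      ring
  rw [Finset.sum_congr rfl this, Finset.sum_ite_eq' (range (m+1)) 0]
  simp

lemma alt_sum (m n : ℕ) :
    ∑ k ∈ range n, (-1:ℚ)^k * 2 * (k:ℚ)^m
      = eulerPolyNat m 0 - (-1:ℚ)^n * eulerPolyNat m n := by
  induction n with
  | zero => simp
  | succ n ih =>
    rw [Finset.sum_range_succ, ih]
    have h2 : eulerPolyNat m (n+1) = 2*(n:ℚ)^m - eulerPolyNat m n := by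
      linarith [eulerPolyNat_step m n]
    push_cast [h2]
    ring

lemma alt_int (n : ℕ) : ∑ k ∈ range (2*n+1), (-1:ℤ)^k * ((k:ℤ)+1) = n+1 := by
  induction n with
  | zero => simp
  | succ n ih =>
    have hr : 2*(n+1)+1 = (2*n+1) + 1 + 1 := by ring
    rw [hr, Finset.sum_range_succ, Finset.sum_range_succ, ih]
    have h1 : (-1:ℤ)^(2*n+1) = -1 := Odd.neg_one_pow ⟨n, by ring⟩
    have h2 : (-1:ℤ)^(2*n+1+1) = 1 := Even.neg_one_pow ⟨n+1, by ring⟩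
    rw [h1, h2]
    push_cast
    ring

lemma geo_zmod (p : ℕ) (hp : p.Prime) (k : ℕ) (hk : k < p) (hk1 : k ≠ 1) :
    ∑ m ∈ range (p+1), (k:ZMod p)^m = (k:ZMod p) + 1 := by
  haveI := Fact.mk hp
  have hx1 : (k : ZMod p) ≠ 1 := by
    intro h
    apply hk1
    have hv := congrArg ZMod.val h
    rwa [ZMod.val_cast_of_lt hk, ZMod.val_one p] at hv
  have hsub : (k:ZMod p) - 1 ≠ 0 := sub_ne_zero.mpr hx1
  rw [geom_sum_eq hx1, div_eq_iff hsub, pow_succ, ZMod.pow_card]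
  ring

theorem euler_sum_congruence (p : ℕ) (hp : p.Prime) (hodd : Odd p) :
    ∃ t : ℚ, ¬ (p ∣ t.den) ∧
      (∑ j ∈ Finset.range (p + 1), eulerNumber j) - 3 / 2 = (p : ℚ) * t := by
  obtain ⟨n, hn⟩ := hodd
  have hp1 : 1 < p := hp.one_lt
  haveI := Fact.mk hp
  set Tz : ℤ := ∑ m ∈ range (p+1), ∑ k ∈ range p, (-1:ℤ)^k * (k:ℤ)^m with hTz
  -- Step 1 : 2 * Tz ≡ 3 mod p
  have hT1 : (Tz : ZMod p) = (n : ZMod p) + 2 := by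
    have e0 : (Tz : ZMod p) = ∑ k ∈ range p, (-1:ZMod p)^k * (∑ m ∈ range (p+1), (k:ZMod p)^m) := by
      rw [hTz]
      push_cast
      rw [Finset.sum_comm]
      exact Finset.sum_congr rfl fun k _ => (Finset.mul_sum _ _ _).symm
    have hG : ∀ k ∈ range p, (-1:ZMod p)^k * (∑ m ∈ range (p+1), (k:ZMod p)^m)
        = (-1:ZMod p)^k * ((k:ZMod p)+1) + (-1:ZMod p)^k * (if k = 1 then -1 else 0) := by
      intro k hk
      rw [mem_range] at hk
      by_cases h1 : k = 1
      · subst h1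
        have : ∑ m ∈ range (p+1), ((1:ℕ):ZMod p)^m = 1 := by
          simp only [Nat.cast_one, one_pow, Finset.sum_const, Finset.card_range, nsmul_eq_mul,
            mul_one]
          rw [show ((p+1 : ℕ) : ZMod p) = ((p:ℕ):ZMod p) + 1 by push_cast; ring,
            ZMod.natCast_self]
          ring
        rw [this]
        simp
      · rw [geo_zmod p hp k hk h1]
        simp [h1]
    rw [e0, Finset.sum_congr rfl hG, Finset.sum_add_distrib]
    have h1 : ∑ k ∈ range p, (-1:ZMod p)^k * ((k:ZMod p)+1) = (n:ZMod p) + 1 := by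
      have hc := congrArg (Int.cast : ℤ → ZMod p) (alt_int n)
      push_cast at hc
      rw [← hn] at hc
      rw [← hc]
    have h2 : ∑ k ∈ range p, (-1:ZMod p)^k * (if k = 1 then -1 else 0) = 1 := by
      rw [Finset.sum_eq_single 1]
      · norm_num
      · intro k _ hk
        simp [hk]
      · intro h
        exact absurd (mem_range.mpr (by omega)) h
    rw [h1, h2]
    ring
  have hdvd : (p:ℤ) ∣ (2*Tz - 3) := by
    rw [← ZMod.intCast_zmod_eq_zero_iff_dvd]
    push_cast [hT1]
    have h2n : ((2*n+1 : ℕ) : ZMod p) = 0 := by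
      rw [← hn]
      exact ZMod.natCast_self p
    push_cast at h2n
    linear_combination h2n
  obtain ⟨z, hz⟩ := hdvd
  -- Step 2 : rational identity
  set U : ℚ := ∑ m ∈ range (p+1), ∑ k ∈ range m,
      (m.choose k : ℚ) * eulerNumber k * (p:ℚ)^(m-1-k) with hU
  have hfp : ∀ m, eulerPolyNat m p = eulerNumber m
      + (p:ℚ) * (∑ k ∈ range m, (m.choose k:ℚ) * eulerNumber k * (p:ℚ)^(m-1-k)) := by
    intro m
    unfold eulerPolyNat
    rw [Finset.sum_range_succ, Nat.choose_self, Nat.sub_self]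
    have : ∀ k ∈ range m, (m.choose k:ℚ) * eulerNumber k * (p:ℚ)^(m-k)
        = (p:ℚ) * ((m.choose k:ℚ) * eulerNumber k * (p:ℚ)^(m-1-k)) := by
      intro k hk
      rw [mem_range] at hk
      rw [show m - k = (m-1-k)+1 by omega, pow_succ]
      ring
    rw [Finset.sum_congr rfl this, ← Finset.mul_sum]
    push_cast
    ring
  have hL5 : ∀ m, ∑ k ∈ range p, (-1:ℚ)^k * 2 * (k:ℚ)^m
      = eulerNumber m + eulerPolyNat m p := by
    intro m
    rw [alt_sum m p, eulerPolyNat_zero]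
    have : (-1:ℚ)^p = -1 := Odd.neg_one_pow ⟨n, by omega⟩
    rw [this]
    ring
  have hmain : 2 * (Tz : ℚ) = 2 * (∑ j ∈ range (p+1), eulerNumber j) + (p:ℚ) * U := by
    have lhs : 2 * (Tz : ℚ) = ∑ m ∈ range (p+1), ∑ k ∈ range p, (-1:ℚ)^k * 2 * (k:ℚ)^m := by
      rw [hTz]
      push_cast
      rw [Finset.mul_sum]
      apply Finset.sum_congr rfl
      intro m _
      rw [Finset.mul_sum]
      apply Finset.sum_congr rfl
      intro k _
      ring
    rw [lhs]
    have : ∀ m ∈ range (p+1), ∑ k ∈ range p, (-1:ℚ)^k * 2 * (k:ℚ)^m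
        = 2 * eulerNumber m + (p:ℚ) * (∑ k ∈ range m, (m.choose k:ℚ) * eulerNumber k * (p:ℚ)^(m-1-k)) := by
      intro m _
      rw [hL5 m, hfp m]
      ring
    rw [Finset.sum_congr rfl this, Finset.sum_add_distrib, ← Finset.mul_sum, ← Finset.mul_sum, ← hU]
  -- Step 3 : assemble
  refine ⟨((z:ℚ) - U)/2, ?_, ?_⟩
  · -- denominator
    have hU2 : U * 2^p ∈ (Int.castRingHom ℚ).range := by
      rw [hU, Finset.sum_mul]
      apply Subring.sum_mem
      intro m hm
      rw [mem_range] at hm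
      rw [Finset.sum_mul]
      apply Subring.sum_mem
      intro k hk
      rw [mem_range] at hk
      have : (m.choose k : ℚ) * eulerNumber k * (p:ℚ)^(m-1-k) * 2^p
          = (m.choose k : ℚ) * (p:ℚ)^(m-1-k) * 2^(p-k) * (eulerNumber k * 2^k) := by
        rw [show (2:ℚ)^p = 2^(p-k) * 2^k by rw [← pow_add]; congr 1; omega]
        ring
      rw [this]
      apply Subring.mul_mem
      apply Subring.mul_mem
      apply Subring.mul_mem
      · exact ⟨m.choose k, by push_cast; norm_num⟩
      · exact ⟨(p:ℤ)^(m-1-k), by push_cast; norm_num⟩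
      · exact ⟨2^(p-k), by push_cast; norm_num⟩
      · exact euler_dyadic k
    have ht2 : (((z:ℚ) - U)/2) * 2^(p+1) ∈ (Int.castRingHom ℚ).range := by
      have : (((z:ℚ) - U)/2) * 2^(p+1) = (z:ℚ) * 2^p - U * 2^p := by
        rw [pow_succ]
        ring
      rw [this]
      apply Subring.sub_mem
      · exact ⟨z * 2^p, by push_cast; norm_num⟩
      · exact hU2
    obtain ⟨w, hw⟩ := ht2
    have h2ne : ((2:ℚ))^(p+1) ≠ 0 := by positivity
    have hval : ((z:ℚ) - U)/2 = (w:ℚ) / (2:ℚ)^(p+1) := by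
      rw [eq_div_iff h2ne]
      simpa using hw.symm
    intro hpd
    have hden : ((((z:ℚ) - U)/2).den : ℤ) ∣ (2^(p+1) : ℤ) := by
      rw [hval, show ((w:ℚ) / (2:ℚ)^(p+1)) = Rat.divInt w (2^(p+1)) by
        rw [Rat.divInt_eq_div]; push_cast; ring]
      exact Rat.den_dvd w (2^(p+1))
    have hdp : (p:ℤ) ∣ (2:ℤ)^(p+1) := dvd_trans (Int.natCast_dvd_natCast.mpr hpd) hden
    have hp_int : Prime (p:ℤ) := Int.prime_iff_natAbs_prime.mpr (by simpa using hp)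
    have hp2 : (p:ℤ) ∣ 2 := hp_int.dvd_of_dvd_pow hdp
    have hfin : p ∣ 2 := by exact_mod_cast hp2
    have := Nat.le_of_dvd (by norm_num) hfin
    omega
  · have : (∑ j ∈ range (p+1), eulerNumber j) = (Tz:ℚ) - (p:ℚ)*U/2 := by linarith [hmain]
    rw [this]
    have hz' : 2*(Tz:ℚ) - 3 = (p:ℚ) * z := by exact_mod_cast congrArg (Int.cast : ℤ → ℚ) hz
    field_simp
    linarith [hz']
end

section
/- For every odd prime p, the rational number p · (∑_{j=0}^{p} B_j/(p−j+1)) + 1 is p times a rational number whose denominator is not divisible by p; that is, p ∑_{j=0}^{p} B_j/(p−j+1) ≡ -1 (mod p) in the ring of p-integral rationals. -/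
open Finset

namespace BWSC

lemma choose_div_eq (i m : ℕ) (h : i ≤ m) :
    (((m + 1).choose i : ℚ)) / (m + 1) = ((m.choose i : ℚ)) / ((m + 1 - i : ℕ)) := by
  have hnat : (m + 1) * m.choose i = (m + 1).choose i * (m + 1 - i) := by
    have h1 := Nat.add_one_mul_choose_eq m (m - i)
    rw [Nat.choose_symm h] at h1
    have h2 : m - i + 1 = m + 1 - i := by omega
    rw [h2] at h1
    rw [h1, Nat.choose_symm (by omega : i ≤ m + 1)]
  have hd1 : ((m : ℚ) + 1) ≠ 0 := by positivity
  have hd2 : ((m + 1 - i : ℕ) : ℚ) ≠ 0 := by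
    have : 1 ≤ m + 1 - i := by omega
    exact_mod_cast Nat.one_le_iff_ne_zero.mp this
  field_simp
  exact_mod_cast hnat.symm

lemma aux_three_pow (v : ℕ) (hv : 1 ≤ v) : v + 2 ≤ 3 ^ v := by
  induction v with
  | zero => omega
  | succ n ih =>
    rcases Nat.eq_zero_or_pos n with rfl | hn
    · norm_num
    · have h1 := ih hn
      calc n + 1 + 2 ≤ 3 * (n + 2) := by omega
        _ ≤ 3 * 3 ^ n := by exact Nat.mul_le_mul_left 3 h1
        _ = 3 ^ (n + 1) := by rw [pow_succ]; ring

variable (p : ℕ) [hp : Fact p.Prime]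

/-- If a rational has p-adic norm ≤ 1 then p does not divide its denominator. -/
lemma not_dvd_den_of_norm_le_one {q : ℚ} (h : ‖(q : ℚ_[p])‖ ≤ 1) : ¬ (p ∣ q.den) := by
  intro hd
  have hq0 : q ≠ 0 := by
    rintro rfl
    simp only [Rat.den_zero, Nat.dvd_one] at hd
    exact hp.out.ne_one hd
  have hnum : ¬ ((p : ℤ) ∣ q.num) := by
    rw [Int.natCast_dvd]
    intro hn
    have := Nat.Coprime.eq_one_of_dvd (Nat.Coprime.coprime_dvd_left hn q.reduced) hd
    exact hp.out.ne_one this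
  have hnorm_num : ‖((q.num : ℤ) : ℚ_[p])‖ = 1 :=
    le_antisymm (Padic.norm_int_le_one _)
      (le_of_not_gt (fun hlt => hnum (Padic.norm_intCast_lt_one_iff.mp hlt)))
  have hden_lt : ‖((q.den : ℤ) : ℚ_[p])‖ < 1 :=
    Padic.norm_intCast_lt_one_iff.mpr (Int.natCast_dvd_natCast.mpr hd)
  have hden0 : ((q.den : ℤ) : ℚ_[p]) ≠ 0 := by
    exact_mod_cast (Nat.cast_ne_zero (R := ℚ_[p])).mpr q.den_nz
  have hcast : (q : ℚ_[p]) = ((q.num : ℤ) : ℚ_[p]) / ((q.den : ℤ) : ℚ_[p]) := by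
    rw [Rat.cast_def]
    push_cast
    ring
  rw [hcast, norm_div, hnorm_num] at h
  have hpos : 0 < ‖((q.den : ℤ) : ℚ_[p])‖ := norm_pos_iff.mpr hden0
  have : (1:ℝ) ≤ ‖((q.den : ℤ) : ℚ_[p])‖ := by
    rw [div_le_iff₀ hpos] at h; linarith
  linarith

lemma norm_nat_eq_one {k : ℕ} (hk : ¬ p ∣ k) : ‖(k : ℚ_[p])‖ = 1 := by
  have h1 : ‖((k : ℤ) : ℚ_[p])‖ ≤ 1 := Padic.norm_int_le_one _
  have h2 : ¬ ‖((k : ℤ) : ℚ_[p])‖ < 1 := fun hlt =>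
    hk (Int.natCast_dvd_natCast.mp (Padic.norm_intCast_lt_one_iff.mp hlt))
  have : ((k : ℤ) : ℚ_[p]) = (k : ℚ_[p]) := by push_cast; ring
  rw [this] at h1 h2
  linarith

lemma val_add_two_le (hp3 : 3 ≤ p) {k : ℕ} (hk : 2 ≤ k) : padicValNat p k + 2 ≤ k := by
  set v := padicValNat p k with hv
  have hd : p ^ v ∣ k := pow_padicValNat_dvd
  have hle : p ^ v ≤ k := Nat.le_of_dvd (by omega) hd
  rcases Nat.eq_zero_or_pos v with h0 | h1
  · omega
  · have h3 : 3 ^ v ≤ p ^ v := Nat.pow_le_pow_left hp3 v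
    have := aux_three_pow v h1
    omega

lemma norm_pow_div (hp3 : 3 ≤ p) {k : ℕ} (hk : 2 ≤ k) :
    ‖(p : ℚ_[p]) ^ k / (k : ℚ_[p])‖ ≤ (p : ℝ)⁻¹ * (p : ℝ)⁻¹ := by
  set v := padicValNat p k with hv
  have hk0 : k ≠ 0 := by omega
  have hu : ¬ p ∣ (k / p ^ v) := by
    have := Nat.not_dvd_ordCompl hp.out hk0
    rwa [Nat.factorization_def _ hp.out] at this
  have hsplit : (k : ℚ_[p]) = (p : ℚ_[p]) ^ v * ((k / p ^ v : ℕ) : ℚ_[p]) := by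
    have := Nat.ordProj_mul_ordCompl_eq_self k p
    rw [Nat.factorization_def _ hp.out] at this
    exact_mod_cast (congrArg (fun n : ℕ => (n : ℚ_[p])) this).symm
  have hnormu : ‖((k / p ^ v : ℕ) : ℚ_[p])‖ = 1 := norm_nat_eq_one p hu
  have hppos : (0:ℝ) < (p:ℝ)⁻¹ := by
    have : (0:ℝ) < (p:ℝ) := by exact_mod_cast hp.out.pos
    positivity
  rw [norm_div, hsplit, norm_mul, hnormu, mul_one, norm_pow, norm_pow, Padic.norm_p]
  have hv2 : v + 2 ≤ k := val_add_two_le p hp3 hk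
  calc ((p:ℝ)⁻¹) ^ k / ((p:ℝ)⁻¹) ^ v ≤ ((p:ℝ)⁻¹) ^ (v + 2) / ((p:ℝ)⁻¹) ^ v := by
        have hle1 : (p:ℝ)⁻¹ ≤ 1 := by
          rw [inv_le_one_iff₀]; right; exact_mod_cast Nat.one_le_iff_ne_zero.mpr hp.out.pos.ne'
        exact (div_le_div_iff_of_pos_right (by positivity)).mpr
          (pow_le_pow_of_le_one hppos.le hle1 hv2)
    _ = (p:ℝ)⁻¹ * (p:ℝ)⁻¹ := by
        rw [pow_add]
        field_simp

noncomputable def B (m : ℕ) : ℚ_[p] := ((bernoulli m : ℚ) : ℚ_[p])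

noncomputable def S (m : ℕ) : ℚ_[p] := ∑ k ∈ range p, (k : ℚ_[p]) ^ m

lemma norm_S_le_one (m : ℕ) : ‖S p m‖ ≤ 1 := by
  have : S p m = ((∑ k ∈ range p, (k : ℤ) ^ m : ℤ) : ℚ_[p]) := by
    unfold S; push_cast; ring
  rw [this]
  exact Padic.norm_int_le_one _

lemma keyA (hp3 : 3 ≤ p) : ∀ m : ℕ, ‖(p : ℚ_[p]) * B p m - S p m‖ ≤ (p : ℝ)⁻¹ := by
  intro m
  induction m using Nat.strong_induction_on with
  | _ m ih =>
  have hppos : (0:ℝ) < (p:ℝ) := by exact_mod_cast hp.out.pos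
  have hpinv_le : (p:ℝ)⁻¹ ≤ 1 := by
    rw [inv_le_one_iff₀]; right; exact_mod_cast hp.out.one_lt.le
  have hm1 : ((m : ℚ_[p]) + 1) ≠ 0 := Nat.cast_add_one_ne_zero m
  -- Faulhaber cast to ℚ_[p]
  have hf : S p m = ∑ i ∈ range (m + 1),
      B p i * ((m + 1).choose i : ℚ_[p]) * (p : ℚ_[p]) ^ (m + 1 - i) / ((m : ℚ_[p]) + 1) := by
    have h := congrArg (fun q : ℚ => (q : ℚ_[p])) (sum_range_pow p m)
    simp only [Rat.cast_sum, Rat.cast_pow, Rat.cast_natCast, Rat.cast_div, Rat.cast_mul,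
      Rat.cast_add, Rat.cast_one] at h
    unfold S B
    exact_mod_cast h
  -- split off the top term
  have hsplit : S p m = (∑ i ∈ range m,
      B p i * ((m + 1).choose i : ℚ_[p]) * (p : ℚ_[p]) ^ (m + 1 - i) / ((m : ℚ_[p]) + 1))
      + (p : ℚ_[p]) * B p m := by
    rw [hf, sum_range_succ]
    congr 1
    rw [Nat.choose_succ_self_right, Nat.add_sub_cancel_left, pow_one]
    have : ((m + 1 : ℕ) : ℚ_[p]) = (m : ℚ_[p]) + 1 := by push_cast; ring
    rw [this]
    field_simp
  have hgoal : (p : ℚ_[p]) * B p m - S p m = -(∑ i ∈ range m,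
      B p i * ((m + 1).choose i : ℚ_[p]) * (p : ℚ_[p]) ^ (m + 1 - i) / ((m : ℚ_[p]) + 1)) := by
    rw [hsplit]; ring
  rw [hgoal, norm_neg]
  apply IsUltrametricDist.norm_sum_le_of_forall_le_of_nonneg (by positivity)
  intro i hi
  rw [mem_range] at hi
  -- rewrite the term
  have hc' : (((m + 1).choose i : ℚ_[p])) / ((m : ℚ_[p]) + 1)
      = ((m.choose i : ℚ_[p])) / (((m + 1 - i : ℕ)) : ℚ_[p]) := by
    have hc := congrArg (fun q : ℚ => (q : ℚ_[p])) (choose_div_eq i m hi.le)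
    simp only [Rat.cast_div, Rat.cast_natCast, Rat.cast_add, Rat.cast_one] at hc
    exact_mod_cast hc
  have key : B p i * ((m + 1).choose i : ℚ_[p]) * (p : ℚ_[p]) ^ (m + 1 - i) / ((m : ℚ_[p]) + 1)
      = B p i * (m.choose i : ℚ_[p]) * ((p : ℚ_[p]) ^ (m + 1 - i) / (((m + 1 - i : ℕ)) : ℚ_[p])) := by
    calc B p i * ((m + 1).choose i : ℚ_[p]) * (p : ℚ_[p]) ^ (m + 1 - i) / ((m : ℚ_[p]) + 1)
        = B p i * (p : ℚ_[p]) ^ (m + 1 - i) * (((m + 1).choose i : ℚ_[p]) / ((m : ℚ_[p]) + 1)) := by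
          ring
      _ = B p i * (p : ℚ_[p]) ^ (m + 1 - i) * ((m.choose i : ℚ_[p]) / (((m + 1 - i : ℕ)) : ℚ_[p])) := by
          rw [hc']
      _ = B p i * (m.choose i : ℚ_[p]) * ((p : ℚ_[p]) ^ (m + 1 - i) / (((m + 1 - i : ℕ)) : ℚ_[p])) := by
          ring
  rw [key, norm_mul, norm_mul]
  -- bounds
  have hBi : ‖B p i‖ ≤ (p : ℝ) := by
    have h1 := ih i hi
    have h2 : ‖(p : ℚ_[p]) * B p i‖ ≤ 1 := by
      have h3 := Padic.nonarchimedean ((p : ℚ_[p]) * B p i - S p i) (S p i)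
      rw [sub_add_cancel] at h3
      exact h3.trans (max_le (h1.trans hpinv_le) (norm_S_le_one p i))
    rw [norm_mul, Padic.norm_p] at h2
    calc ‖B p i‖ = (p:ℝ) * ((p:ℝ)⁻¹ * ‖B p i‖) := by field_simp
      _ ≤ (p:ℝ) * 1 := by
          apply mul_le_mul_of_nonneg_left h2 hppos.le
      _ = (p:ℝ) := mul_one _
  have hch : ‖(m.choose i : ℚ_[p])‖ ≤ 1 := by
    have h4 := Padic.norm_int_le_one (p := p) (m.choose i : ℤ)
    have : ((m.choose i : ℤ) : ℚ_[p]) = (m.choose i : ℚ_[p]) := by push_cast; ring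
    rwa [this] at h4
  have hpk : ‖(p : ℚ_[p]) ^ (m + 1 - i) / (((m + 1 - i : ℕ)) : ℚ_[p])‖ ≤ (p:ℝ)⁻¹ * (p:ℝ)⁻¹ :=
    norm_pow_div p hp3 (by omega)
  calc ‖B p i‖ * ‖(m.choose i : ℚ_[p])‖ * ‖(p : ℚ_[p]) ^ (m + 1 - i) / (((m + 1 - i : ℕ)) : ℚ_[p])‖
      ≤ (p:ℝ) * 1 * ((p:ℝ)⁻¹ * (p:ℝ)⁻¹) := by
        gcongr <;> first | exact norm_nonneg _ | assumption
    _ = (p:ℝ)⁻¹ := by field_simp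

lemma cast_sum_pow (m : ℕ) :
    ((∑ k ∈ range p, k ^ m : ℕ) : ZMod p) = ∑ x : ZMod p, x ^ m := by
  haveI : NeZero p := ⟨hp.out.pos.ne'⟩
  push_cast
  exact Finset.sum_nbij' (fun k => (k : ZMod p)) (fun x => x.val)
    (fun a _ => mem_univ _) (fun x _ => mem_range.mpr (ZMod.val_lt x))
    (fun a ha => ZMod.val_cast_of_lt (mem_range.mp ha))
    (fun x _ => ZMod.natCast_zmod_val x)
    (fun a _ => rfl)

lemma dvd_sum_pow (hp3 : 3 ≤ p) {m : ℕ} (hm1 : 1 ≤ m) (hm2 : m ≤ p - 2) :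
    (p : ℕ) ∣ ∑ k ∈ range p, k ^ m := by
  rw [← ZMod.natCast_eq_zero_iff, cast_sum_pow]
  have hcard : Fintype.card (ZMod p) = p := ZMod.card p
  have : m < Fintype.card (ZMod p) - 1 := by omega
  exact FiniteField.sum_pow_lt_card_sub_one (ZMod p) m this

lemma dvd_sum_pow_top (hp3 : 3 ≤ p) :
    (p : ℕ) ∣ (∑ k ∈ range p, k ^ (p - 1)) + 1 := by
  haveI : NeZero p := ⟨hp.out.pos.ne'⟩
  rw [← ZMod.natCast_eq_zero_iff, Nat.cast_add, Nat.cast_one, cast_sum_pow]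
  have hsum : ∑ x : ZMod p, x ^ (p - 1) = ((p - 1 : ℕ) : ZMod p) := by
    rw [← Finset.add_sum_erase _ _ (mem_univ (0 : ZMod p))]
    rw [zero_pow (by omega : p - 1 ≠ 0), zero_add]
    rw [Finset.sum_congr rfl (fun x hx => ZMod.pow_card_sub_one_eq_one
      (Finset.ne_of_mem_erase hx))]
    rw [Finset.sum_const, nsmul_one]
    congr 1
    rw [Finset.card_erase_of_mem (mem_univ _), Finset.card_univ, ZMod.card]
  rw [hsum]
  have : ((p - 1 : ℕ) : ZMod p) = -1 := by
    have h1 : ((p : ℕ) : ZMod p) = 0 := ZMod.natCast_self p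
    rw [Nat.cast_sub (by omega : 1 ≤ p), h1, Nat.cast_one, zero_sub]
  rw [this]
  ring

lemma norm_B_le_one (hp3 : 3 ≤ p) {m : ℕ} (hm1 : 1 ≤ m) (hm2 : m ≤ p - 2) :
    ‖B p m‖ ≤ 1 := by
  have hppos : (0:ℝ) < (p:ℝ) := by exact_mod_cast hp.out.pos
  have hSm : ‖S p m‖ ≤ (p:ℝ)⁻¹ := by
    obtain ⟨c, hc⟩ := dvd_sum_pow p hp3 hm1 hm2
    have hS : S p m = (p : ℚ_[p]) * ((c : ℤ) : ℚ_[p]) := by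
      unfold S
      have : (∑ k ∈ range p, (k : ℚ_[p]) ^ m) = ((p * c : ℕ) : ℚ_[p]) := by
        rw [← hc]; push_cast; ring
      rw [this]; push_cast; ring
    rw [hS, norm_mul, Padic.norm_p]
    calc (p:ℝ)⁻¹ * ‖((c : ℤ) : ℚ_[p])‖ ≤ (p:ℝ)⁻¹ * 1 := by
          apply mul_le_mul_of_nonneg_left (Padic.norm_int_le_one _) (by positivity)
      _ = (p:ℝ)⁻¹ := mul_one _
  have h1 := keyA p hp3 m
  have h2 : ‖(p : ℚ_[p]) * B p m‖ ≤ (p:ℝ)⁻¹ := by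
    have h3 := Padic.nonarchimedean ((p : ℚ_[p]) * B p m - S p m) (S p m)
    rw [sub_add_cancel] at h3
    exact h3.trans (max_le h1 hSm)
  rw [norm_mul, Padic.norm_p] at h2
  calc ‖B p m‖ = (p:ℝ) * ((p:ℝ)⁻¹ * ‖B p m‖) := by field_simp
    _ ≤ (p:ℝ) * (p:ℝ)⁻¹ := mul_le_mul_of_nonneg_left h2 hppos.le
    _ = 1 := by field_simp

lemma norm_pB_add_one (hp3 : 3 ≤ p) :
    ‖(p : ℚ_[p]) * B p (p - 1) + 1‖ ≤ (p:ℝ)⁻¹ := by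
  have hS1 : ‖S p (p - 1) + 1‖ ≤ (p:ℝ)⁻¹ := by
    obtain ⟨c, hc⟩ := dvd_sum_pow_top p hp3
    have hS : S p (p - 1) + 1 = (p : ℚ_[p]) * ((c : ℤ) : ℚ_[p]) := by
      unfold S
      have : (∑ k ∈ range p, (k : ℚ_[p]) ^ (p - 1)) + 1 = (((∑ k ∈ range p, k ^ (p - 1)) + 1 : ℕ) : ℚ_[p]) := by
        push_cast; ring
      rw [this, hc]; push_cast; ring
    rw [hS, norm_mul, Padic.norm_p]
    calc (p:ℝ)⁻¹ * ‖((c : ℤ) : ℚ_[p])‖ ≤ (p:ℝ)⁻¹ * 1 := by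
          apply mul_le_mul_of_nonneg_left (Padic.norm_int_le_one _) (by positivity)
      _ = (p:ℝ)⁻¹ := mul_one _
  have h1 := keyA p hp3 (p - 1)
  have h3 := Padic.nonarchimedean ((p : ℚ_[p]) * B p (p - 1) - S p (p - 1)) (S p (p - 1) + 1)
  have heq : ((p : ℚ_[p]) * B p (p - 1) - S p (p - 1)) + (S p (p - 1) + 1)
      = (p : ℚ_[p]) * B p (p - 1) + 1 := by ring
  rw [heq] at h3
  exact h3.trans (max_le h1 hS1)

end BWSC

theorem bernoulli_weighted_sum_congruence (p : ℕ) (hp : p.Prime) (hodd : Odd p) :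
    ∃ t : ℚ, ¬ (p ∣ t.den) ∧
      (p : ℚ) * (∑ j ∈ Finset.range (p + 1), bernoulli j / ((p - j : ℕ) + 1 : ℚ)) + 1
        = (p : ℚ) * t := by
  haveI : Fact p.Prime := ⟨hp⟩
  have hp3 : 3 ≤ p := by
    have h2 := hp.two_le
    rcases Nat.odd_iff.mp hodd with h
    omega
  have hpq0 : (p : ℚ) ≠ 0 := Nat.cast_ne_zero.mpr (by omega)
  have hpQp0 : (p : ℚ_[p]) ≠ 0 := Nat.cast_ne_zero.mpr (by omega)
  refine ⟨(∑ j ∈ Finset.range (p + 1), bernoulli j / ((p - j : ℕ) + 1 : ℚ)) + 1 / p, ?_, ?_⟩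
  · apply BWSC.not_dvd_den_of_norm_le_one p
    have hcast : ((((∑ j ∈ Finset.range (p + 1), bernoulli j / ((p - j : ℕ) + 1 : ℚ)) + 1 / p : ℚ)) : ℚ_[p])
        = (∑ j ∈ Finset.range (p + 1), BWSC.B p j / (((p - j : ℕ) : ℚ_[p]) + 1)) + ((p : ℚ_[p]))⁻¹ := by
      unfold BWSC.B
      push_cast
      ring
    rw [hcast]
    set G : ℕ → ℚ_[p] := fun j => BWSC.B p j / (((p - j : ℕ) : ℚ_[p]) + 1) with hG
    have h1mem : 1 ∈ Finset.range (p + 1) := Finset.mem_range.mpr (by omega)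
    have hpm1mem : p - 1 ∈ (Finset.range (p + 1)).erase 1 :=
      Finset.mem_erase.mpr ⟨by omega, Finset.mem_range.mpr (by omega)⟩
    rw [← Finset.add_sum_erase _ G h1mem, ← Finset.add_sum_erase _ G hpm1mem]
    have hre : G 1 + (G (p - 1) + ∑ j ∈ ((Finset.range (p + 1)).erase 1).erase (p - 1), G j) + (p : ℚ_[p])⁻¹
        = (G 1 + G (p - 1) + (p : ℚ_[p])⁻¹) + ∑ j ∈ ((Finset.range (p + 1)).erase 1).erase (p - 1), G j := by
      ring
    rw [hre]
    apply (Padic.nonarchimedean _ _).trans (max_le ?_ ?_)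
    · -- the exceptional part
      have hG1 : G 1 = ((-1/2 : ℚ) : ℚ_[p]) / (p : ℚ_[p]) := by
        simp only [hG, BWSC.B, bernoulli_one]
        congr 1
        have h' : p - 1 + 1 = p := by omega
        calc ((p - 1 : ℕ) : ℚ_[p]) + 1 = ((p - 1 + 1 : ℕ) : ℚ_[p]) := by push_cast; ring
          _ = (p : ℚ_[p]) := by rw [h']
      have hGp : G (p - 1) = BWSC.B p (p - 1) / 2 := by
        simp only [hG]
        congr 1
        have h' : p - (p - 1) = 1 := by omega
        rw [h']
        norm_num
      have hX : G 1 + G (p - 1) + (p : ℚ_[p])⁻¹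
          = ((p : ℚ_[p]) * BWSC.B p (p - 1) + 1) / (2 * (p : ℚ_[p])) := by
        rw [hG1, hGp]
        have h20 : (2 : ℚ_[p]) ≠ 0 := two_ne_zero
        push_cast
        field_simp
        ring
      rw [hX, norm_div, norm_mul]
      have h2norm : ‖(2 : ℚ_[p])‖ = 1 := by
        have hnd : ¬ p ∣ 2 := by
          intro h
          have := Nat.le_of_dvd (by norm_num) h
          omega
        have := BWSC.norm_nat_eq_one p hnd
        simpa using this
      rw [h2norm, one_mul, Padic.norm_p]
      rw [div_le_one (by positivity)]
      exact BWSC.norm_pB_add_one p hp3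
    · -- the regular part
      apply IsUltrametricDist.norm_sum_le_of_forall_le_of_nonneg zero_le_one
      intro j hj
      have hjne : j ≠ p - 1 := Finset.ne_of_mem_erase hj
      have hj' := Finset.mem_of_mem_erase hj
      have hjne1 : j ≠ 1 := Finset.ne_of_mem_erase hj'
      have hjlt : j < p + 1 := Finset.mem_range.mp (Finset.mem_of_mem_erase hj')
      have hd : ¬ p ∣ (p - j + 1) := by
        rintro ⟨c, hc⟩
        match c with
        | 0 => omega
        | 1 => omega
        | (c + 2) =>
          have h2 : p * 2 ≤ p * (c + 2) := Nat.mul_le_mul_left p (by omega)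
          omega
      have hDnorm : ‖((p - j : ℕ) : ℚ_[p]) + 1‖ = 1 := by
        have heq2 : ((p - j : ℕ) : ℚ_[p]) + 1 = ((p - j + 1 : ℕ) : ℚ_[p]) := by push_cast; ring
        rw [heq2]
        exact BWSC.norm_nat_eq_one p hd
      have hBnorm : ‖BWSC.B p j‖ ≤ 1 := by
        rcases eq_or_ne j 0 with rfl | hj0
        · simp [BWSC.B, bernoulli_zero]
        · rcases eq_or_ne j p with hjp | hjp
          · have hB0 : bernoulli j = 0 := by
              rw [hjp, bernoulli_eq_bernoulli'_of_ne_one (by omega)]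
              exact bernoulli'_eq_zero_of_odd hodd (by omega)
            simp [BWSC.B, hB0]
          · exact BWSC.norm_B_le_one p hp3 (by omega) (by omega)
      calc ‖G j‖ = ‖BWSC.B p j‖ / 1 := by rw [hG, norm_div, hDnorm]
        _ = ‖BWSC.B p j‖ := div_one _
        _ ≤ 1 := hBnorm
  · field_simp
end
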